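/- arXiv:math/9808145 — 2 statements merged into one kernel-verified Lean document; each statement's English description precedes it below -/
import Mathlib

section
/- The kernel of the reduction map SL₂(ℤ_p) → SL₂(ℤ/p) is a pro-p group for p prime. -/
/-!
Let `q` be a prime different from `p`. Every `g ∈ Γ` has a `q`-th root in `Γ`: since `g ≡ 1 mod p`,
the binomial theorem gives `g ^ p ^ k ≡ 1 mod p ^ (k + 1)`, so `a ↦ g ^ a` is `p`-adically
continuous and `g ^ (1 / q)` is the limit of `g ^ c` over integers `c ≡ 1 / q mod p ^ k`.
Hence the `q`-th power map is surjective on every finite quotient of `Γ`, hence injective, so no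
element of the quotient has order `q`, and by Cauchy's theorem its order is a power of `p`.
-/

open Polynomial

section Ring

variable {A : Type*} [Ring A] {p : ℕ}

theorem natCast_pow_succ_dvd_pow_pow_sub_one {g : A} (hg : (p : A) ∣ g - 1) (k : ℕ) :
    (p : A) ^ (k + 1) ∣ g ^ p ^ k - 1 := by
  obtain ⟨y, hy⟩ := hg
  -- `g = 1 + p * y` is the image of `1 + p * X` under `X ↦ y`, so the commutative case applies.
  have key := dvd_sub_pow_of_dvd_sub (R := ℤ[X]) (p := p) (a := 1 + (p : ℤ[X]) * X) (b := 1)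
    (by simp) k
  have := map_dvd (aeval y) key
  rw [sub_eq_iff_eq_add'] at hy
  simpa [hy] using this

theorem natCast_pow_succ_dvd_pow_sub_pow {g : A} (hg : (p : A) ∣ g - 1) {k a b : ℕ}
    (hab : a ≡ b [MOD p ^ k]) : (p : A) ^ (k + 1) ∣ g ^ a - g ^ b := by
  wlog hba : b ≤ a generalizing a b
  · rw [← dvd_neg, neg_sub]
    exact this hab.symm (le_of_not_ge hba)
  obtain ⟨t, ht⟩ := (Nat.modEq_iff_dvd' hba).mp hab.symm
  have hsplit : g ^ a - g ^ b = (g ^ (p ^ k * t) - 1) * g ^ b := by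
    rw [← ht, sub_mul, ← pow_add, Nat.sub_add_cancel hba, one_mul]
  rw [hsplit]
  exact ((natCast_pow_succ_dvd_pow_pow_sub_one hg k).trans
    (dvd_pow_sub_one_of_dvd (dvd_mul_right _ _))).mul_right _

end Ring

section CommRing

variable {R : Type*} [CommRing R] {p : ℕ}

theorem natCast_pow_dvd_sub_iff {x y : R} {k : ℕ} :
    (p : R) ^ k ∣ x - y ↔ Ideal.Quotient.mk (Ideal.span {(p : R) ^ k}) x =
      Ideal.Quotient.mk (Ideal.span {(p : R) ^ k}) y := by
  rw [Ideal.Quotient.eq, Ideal.mem_span_singleton]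

theorem mem_span_natCast_pow_smul_top_iff {x : R} {k : ℕ} :
    x ∈ (Ideal.span {(p : R)} ^ k • ⊤ : Submodule R R) ↔ (p : R) ^ k ∣ x := by
  rw [smul_eq_mul, Ideal.mul_top, Ideal.span_singleton_pow, Ideal.mem_span_singleton]

theorem eq_of_forall_natCast_pow_dvd_sub [IsHausdorff (Ideal.span {(p : R)}) R] {x y : R}
    (h : ∀ k, (p : R) ^ k ∣ x - y) : x = y :=
  sub_eq_zero.mp <| IsHausdorff.haus' (I := Ideal.span {(p : R)}) _ fun k => by
    rw [SModEq.zero, mem_span_natCast_pow_smul_top_iff]; exact h k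

theorem exists_forall_natCast_pow_dvd_sub [IsPrecomplete (Ideal.span {(p : R)}) R] (s : ℕ → R)
    (hs : ∀ {m k}, m ≤ k → (p : R) ^ m ∣ s k - s m) : ∃ L, ∀ k, (p : R) ^ k ∣ L - s k := by
  obtain ⟨L, hL⟩ := IsPrecomplete.prec' (I := Ideal.span {(p : R)}) s fun hmk => by
    rw [SModEq.sub_mem, mem_span_natCast_pow_smul_top_iff, ← dvd_neg, neg_sub]
    exact hs hmk
  refine ⟨L, fun k => ?_⟩
  rw [← dvd_neg, neg_sub, ← mem_span_natCast_pow_smul_top_iff, ← SModEq.sub_mem]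
  exact hL k

end CommRing

namespace Matrix

variable {n R : Type*} [Fintype n] [DecidableEq n] [CommRing R] {p : ℕ}

theorem natCast_pow_dvd_iff {A : Matrix n n R} {k : ℕ} :
    (p : Matrix n n R) ^ k ∣ A ↔ ∀ i j, (p : R) ^ k ∣ A i j := by
  have hmul (B : Matrix n n R) (i j : n) :
      ((p : Matrix n n R) ^ k * B) i j = (p : R) ^ k * B i j := by
    rw [← Nat.cast_pow, ← nsmul_eq_mul, smul_apply, nsmul_eq_mul, Nat.cast_pow]
  constructor
  · rintro ⟨B, rfl⟩ i j
    exact ⟨B i j, hmul B i j⟩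
  · intro h
    choose B hB using h
    exact ⟨of B, ext fun i j => by rw [hmul, of_apply, hB]⟩

theorem natCast_pow_dvd_sub_iff {A B : Matrix n n R} {k : ℕ} :
    (p : Matrix n n R) ^ k ∣ A - B ↔
      (Ideal.Quotient.mk (Ideal.span {(p : R) ^ k})).mapMatrix A =
        (Ideal.Quotient.mk (Ideal.span {(p : R) ^ k})).mapMatrix B := by
  simp only [natCast_pow_dvd_iff, sub_apply, _root_.natCast_pow_dvd_sub_iff, ← ext_iff,
    RingHom.mapMatrix_apply, map_apply]

theorem natCast_pow_dvd_pow_sub_pow {A B : Matrix n n R} {k : ℕ}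
    (h : (p : Matrix n n R) ^ k ∣ A - B) (q : ℕ) : (p : Matrix n n R) ^ k ∣ A ^ q - B ^ q := by
  rw [natCast_pow_dvd_sub_iff] at h ⊢
  rw [map_pow, map_pow, h]

theorem natCast_pow_dvd_det_sub_det {A B : Matrix n n R} {k : ℕ}
    (h : (p : Matrix n n R) ^ k ∣ A - B) : (p : R) ^ k ∣ A.det - B.det := by
  rw [natCast_pow_dvd_sub_iff] at h
  rw [_root_.natCast_pow_dvd_sub_iff, RingHom.map_det, RingHom.map_det, h]

theorem eq_of_forall_natCast_pow_dvd_sub [IsHausdorff (Ideal.span {(p : R)}) R]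
    {A B : Matrix n n R} (h : ∀ k, (p : Matrix n n R) ^ k ∣ A - B) : A = B :=
  ext fun i j => _root_.eq_of_forall_natCast_pow_dvd_sub fun k => by
    simpa using natCast_pow_dvd_iff.mp (h k) i j

theorem exists_forall_natCast_pow_dvd_sub [IsPrecomplete (Ideal.span {(p : R)}) R]
    (s : ℕ → Matrix n n R) (hs : ∀ {m k}, m ≤ k → (p : Matrix n n R) ^ m ∣ s k - s m) :
    ∃ L, ∀ k, (p : Matrix n n R) ^ k ∣ L - s k := by
  choose L hL using fun i j => _root_.exists_forall_natCast_pow_dvd_sub (fun k => s k i j)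
    fun hmk => by simpa using natCast_pow_dvd_iff.mp (hs hmk) i j
  exact ⟨of L, fun k => natCast_pow_dvd_iff.mpr fun i j => by simpa using hL i j k⟩

theorem exists_pow_eq_of_natCast_dvd_sub_one [IsAdicComplete (Ideal.span {(p : R)}) R]
    (hp : p ≠ 0) {q : ℕ} (hq : q.Coprime p) {g : Matrix n n R} (hg : (p : Matrix n n R) ∣ g - 1) :
    ∃ h : Matrix n n R, h ^ q = g ∧ ∀ k, ∃ a : ℕ, (p : Matrix n n R) ^ k ∣ h - g ^ a := by
  have hc (k : ℕ) : ∃ c, q * c ≡ 1 [MOD p ^ k] := by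
    obtain ⟨c, -, hc⟩ := Nat.exists_mul_mod_eq_of_coprime 1 (hq.pow_right k) (pow_ne_zero k hp)
    exact ⟨c, hc⟩
  choose c hc using hc
  -- `c k` approximates `1 / q` to precision `p ^ k`, so `h` is the `p`-adic power `g ^ (1 / q)`.
  have hcauchy {m k : ℕ} (hmk : m ≤ k) : c k ≡ c m [MOD p ^ m] :=
    Nat.ModEq.cancel_left_of_coprime (hq.pow_right m).symm
      (((hc k).of_dvd (pow_dvd_pow p hmk)).trans (hc m).symm)
  obtain ⟨h, hh⟩ := exists_forall_natCast_pow_dvd_sub (fun k => g ^ c k) fun hmk =>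
    (pow_dvd_pow _ (Nat.le_succ _)).trans (natCast_pow_succ_dvd_pow_sub_pow hg (hcauchy hmk))
  refine ⟨h, eq_of_forall_natCast_pow_dvd_sub (p := p) fun k => ?_, fun k => ⟨c k, hh k⟩⟩
  have hpow : (p : Matrix n n R) ^ k ∣ h ^ q - g ^ (q * c k) := by
    simpa [← pow_mul, mul_comm] using natCast_pow_dvd_pow_sub_pow (hh k) q
  have hone : (p : Matrix n n R) ^ k ∣ g ^ (q * c k) - g ^ 1 :=
    (pow_dvd_pow _ k.le_succ).trans (natCast_pow_succ_dvd_pow_sub_pow hg (hc k))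
  simpa using dvd_add hpow hone

end Matrix

namespace Matrix.SpecialLinearGroup

variable {n R S : Type*} [Fintype n] [DecidableEq n] [CommRing R] [CommRing S] {p : ℕ}
  {f : R →+* S}

theorem mem_ker_map_iff (hf : RingHom.ker f = Ideal.span {(p : R)}) {g : SpecialLinearGroup n R} :
    g ∈ (map f).ker ↔ (p : Matrix n n R) ∣ (g : Matrix n n R) - 1 := by
  rw [MonoidHom.mem_ker, SpecialLinearGroup.ext_iff, ← pow_one (p : Matrix n n R),
    natCast_pow_dvd_iff]
  refine forall₂_congr fun i j => ?_
  rw [pow_one, ← Ideal.mem_span_singleton, ← hf, RingHom.mem_ker, sub_apply, map_sub, sub_eq_zero]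
  simp [one_apply, apply_ite f]

theorem pow_surjective_ker_map [IsAdicComplete (Ideal.span {(p : R)}) R] (hp : p ≠ 0)
    (hf : RingHom.ker f = Ideal.span {(p : R)}) {q : ℕ} (hq : q.Coprime p) :
    Function.Surjective fun h : (map (n := n) f).ker => h ^ q := by
  rintro ⟨g, hg⟩
  rw [mem_ker_map_iff hf] at hg
  obtain ⟨h, hhq, hlim⟩ := exists_pow_eq_of_natCast_dvd_sub_one hp hq hg
  have hdet : h.det = 1 := _root_.eq_of_forall_natCast_pow_dvd_sub (p := p) fun k => by
    obtain ⟨a, ha⟩ := hlim k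
    simpa [det_pow] using natCast_pow_dvd_det_sub_det ha
  obtain ⟨a, ha⟩ := hlim 1
  rw [pow_one] at ha
  have hmem := (mem_ker_map_iff hf (g := ⟨h, hdet⟩)).mpr <|
    sub_add_sub_cancel h _ 1 ▸ dvd_add ha (hg.trans (sub_one_dvd_pow_sub_one _ a))
  refine ⟨⟨_, hmem⟩, Subtype.ext <| Subtype.ext ?_⟩
  rw [SubmonoidClass.coe_pow, coe_pow]
  exact hhq

end Matrix.SpecialLinearGroup

theorem IsPGroup.of_surjective_pow {G : Type*} [Group G] [Finite G] {p : ℕ} [Fact p.Prime]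
    (h : ∀ q, q.Prime → q ≠ p → Function.Surjective fun g : G => g ^ q) : IsPGroup p G := by
  rw [IsPGroup.iff_card]
  refine ⟨_, Nat.eq_prime_pow_of_unique_prime_dvd Nat.card_pos.ne' fun {q} hq hdvd => ?_⟩
  by_contra hqp
  have : Fact q.Prime := ⟨hq⟩
  obtain ⟨x, hx⟩ := exists_prime_orderOf_dvd_card' q hdvd
  have hx1 : x = 1 := Finite.injective_iff_surjective.mpr (h q hq hqp) <| by
    simp only [← hx, pow_orderOf_eq_one, one_pow]
  exact hq.one_lt.ne' (by rw [← hx, hx1, orderOf_one])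

/-- The kernel `Γ` of the reduction map `SL₂(ℤ_p) → SL₂(ℤ/p)` is a pro-`p`
group: every finite quotient of `Γ` is a `p`-group. -/
theorem stmt_9 (p : ℕ) [Fact p.Prime] :
    ∀ N : Subgroup
        ((Matrix.SpecialLinearGroup.map (n := Fin 2) (PadicInt.toZMod (p := p))).ker),
      (hN : N.Normal) → N.FiniteIndex →
        haveI := hN
        IsPGroup p
          ((Matrix.SpecialLinearGroup.map (n := Fin 2) (PadicInt.toZMod (p := p))).ker ⧸ N) := by
  intro N hN _
  have hp : p.Prime := Fact.out
  have : IsAdicComplete (Ideal.span {(p : ℤ_[p])}) ℤ_[p] :=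
    PadicInt.maximalIdeal_eq_span_p (p := p) ▸ inferInstance
  refine IsPGroup.of_surjective_pow fun q hq hqp y => ?_
  obtain ⟨g, rfl⟩ := QuotientGroup.mk_surjective y
  obtain ⟨h, rfl⟩ := Matrix.SpecialLinearGroup.pow_surjective_ker_map hp.ne_zero
    (PadicInt.ker_toZMod.trans (PadicInt.maximalIdeal_eq_span_p (p := p)))
    ((Nat.coprime_primes hq hp).mpr hqp) g
  exact ⟨h, rfl⟩
end

section
/- The Scholz–Taussky group ⟨x, y | y^{[x,y]} = y⁻², x³ = y³⟩ has order 243. -/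
set_option maxRecDepth 10000

/-- The Scholz–Taussky group `⟨x, y ∣ y^[x,y] = y⁻², x³ = y³⟩`,
where `[x,y] = x⁻¹y⁻¹xy`. -/
def scholzTausskyRels : Set (FreeGroup (Fin 2)) :=
  let x := FreeGroup.of (0 : Fin 2)
  let y := FreeGroup.of (1 : Fin 2)
  let c := x⁻¹ * y⁻¹ * x * y
  {c⁻¹ * y * c * y ^ 2, x ^ 3 * y⁻¹ ^ 3}

namespace ST

abbrev G := PresentedGroup scholzTausskyRels

def a : G := PresentedGroup.of 0
def b : G := PresentedGroup.of 1

lemma relator_eq_one {r : FreeGroup (Fin 2)} (h : r ∈ scholzTausskyRels) :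
    PresentedGroup.mk scholzTausskyRels r = 1 :=
  (QuotientGroup.eq_one_iff r).mpr (Subgroup.subset_normalClosure h)

lemma rel1 : ((a⁻¹*b⁻¹*a*b)⁻¹ * b * (a⁻¹*b⁻¹*a*b) * b^2 : G) = 1 := by
  have h := relator_eq_one (r :=
    ((FreeGroup.of (0:Fin 2))⁻¹ * (FreeGroup.of (1:Fin 2))⁻¹ * FreeGroup.of 0 * FreeGroup.of 1)⁻¹
      * FreeGroup.of 1 *
    ((FreeGroup.of (0:Fin 2))⁻¹ * (FreeGroup.of (1:Fin 2))⁻¹ * FreeGroup.of 0 * FreeGroup.of 1)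
      * (FreeGroup.of 1)^2) (by left; rfl)
  simpa [map_mul, map_inv, map_pow, a, b, PresentedGroup.of] using h

lemma rel2 : (a^3 : G) = b^3 := by
  have h := relator_eq_one (r := (FreeGroup.of (0:Fin 2))^3 * ((FreeGroup.of (1:Fin 2))⁻¹)^3)
    (by right; rfl)
  simp only [map_mul, map_inv, map_pow, a, b, PresentedGroup.of] at h ⊢
  rw [mul_eq_one_iff_eq_inv] at h
  simpa [inv_pow] using h

/-! Derived elements -/

def z : G := a⁻¹*b⁻¹*a*b
def u : G := b*(b*b)
def C : G := a⁻¹*b*a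
def D : G := a⁻¹*C*a

lemma rel2' : a*(a*a) = u := by
  have h := rel2
  rw [pow_three, pow_three] at h
  exact h

lemma zrel : z⁻¹ * b * z * (b*b) = 1 := by
  have h := rel1
  rw [show (b^2 : G) = b*b from by rw [pow_two]] at h
  exact h

lemma hconj : z⁻¹ * b * z = b⁻¹ * b⁻¹ := by
  calc z⁻¹ * b * z = (z⁻¹ * b * z * (b*b)) * (b⁻¹*b⁻¹) := by group
  _ = 1 * (b⁻¹*b⁻¹) := by rw [zrel]
  _ = b⁻¹*b⁻¹ := by group

lemma hbz : b * z = z * (b⁻¹*b⁻¹) := by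
  calc b * z = z * (z⁻¹ * b * z) := by group
  _ = z * (b⁻¹*b⁻¹) := by rw [hconj]

lemma hzb2 : z * (b*b) = b⁻¹ * z := by
  calc z * (b*b) = b⁻¹ * (b*z) * (b*b) := by group
  _ = b⁻¹ * (z*(b⁻¹*b⁻¹)) * (b*b) := by rw [hbz]
  _ = b⁻¹ * z := by group

lemma hzb : z * b = b * z * u := by
  calc z*b = b*(b⁻¹*z)*b := by group
  _ = b*(z*(b*b))*b := by rw [← hzb2]
  _ = b*z*u := by unfold u; group

lemma cua : Commute u a := by
  rw [← rel2']
  exact ((Commute.refl a).mul_left ((Commute.refl a).mul_left (Commute.refl a)))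

lemma cub : Commute u b := by
  unfold u
  exact ((Commute.refl b).mul_left ((Commute.refl b).mul_left (Commute.refl b)))

lemma cuz : Commute u z :=
  ((cua.inv_right.mul_right cub.inv_right).mul_right cua).mul_right cub

lemma hu3 : u*u*u = 1 := by
  have e1 : z⁻¹ * u * z = u := by
    calc z⁻¹ * u * z = z⁻¹ * (u * z) := by group
    _ = z⁻¹ * (z * u) := by rw [cuz.eq]
    _ = u := by group
  have e2 : z⁻¹ * u * z = (z⁻¹ * b * z)*(z⁻¹ * b * z)*(z⁻¹ * b * z) := by
    unfold u; group
  rw [hconj] at e2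
  have e3 : u = (b⁻¹*b⁻¹)*(b⁻¹*b⁻¹)*(b⁻¹*b⁻¹) := e1 ▸ e2
  calc u*u*u = u*u*((b⁻¹*b⁻¹)*(b⁻¹*b⁻¹)*(b⁻¹*b⁻¹)) := by rw [← e3]
  _ = u*u*(u⁻¹*u⁻¹) := by unfold u; group
  _ = 1 := by group

lemma huinv : u⁻¹ = u*u := by
  calc u⁻¹ = (u*u)*(u*u*u)⁻¹ := by group
  _ = (u*u)*(1:G)⁻¹ := by rw [hu3]
  _ = u*u := by group

lemma hu2inv : (u*u)⁻¹ = u := by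
  calc (u*u)⁻¹ = u⁻¹*u⁻¹ := by group
  _ = (u*u)*(u*u) := by rw [huinv]
  _ = u*(u*u*u) := by group
  _ = u*1 := by rw [hu3]
  _ = u := by group

lemma hba : b*a = a*C := by unfold C; group

lemma hCa : C*a = a*D := by unfold D; group

lemma cab3 : Commute b (a*(a*a)) := by
  rw [rel2']
  exact cub.symm

lemma hDa : D*a = a*b := by
  calc D*a = a⁻¹*a⁻¹*(b*(a*(a*a))) := by unfold D C; group
  _ = a⁻¹*a⁻¹*((a*(a*a))*b) := by rw [cab3.eq]
  _ = a*b := by group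

lemma hku : a⁻¹*u*a = u := by
  calc a⁻¹*u*a = a⁻¹*(u*a) := by group
  _ = a⁻¹*(a*u) := by rw [cua.eq]
  _ = u := by group

lemma hkD : a⁻¹*D*a = b := by
  calc a⁻¹*D*a = a⁻¹*(D*a) := by group
  _ = a⁻¹*(a*b) := by rw [hDa]
  _ = b := by group

lemma hC3 : C*(C*C) = u := by
  calc C*(C*C) = a⁻¹*u*a := by unfold C u; group
  _ = u := hku

lemma hD3 : D*(D*D) = u := by
  calc D*(D*D) = a⁻¹*(C*(C*C))*a := by unfold D; group
  _ = a⁻¹*u*a := by rw [hC3]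
  _ = u := hku

lemma hCzb : C = b*z⁻¹ := by unfold C z; group

lemma hz'b : z⁻¹*b = b*u⁻¹*z⁻¹ := by
  calc z⁻¹*b = z⁻¹*((b*z*u)*(u⁻¹*z⁻¹))*b*(b⁻¹) := by group
  _ = z⁻¹*((z*b)*(u⁻¹*z⁻¹))*b*(b⁻¹) := by rw [← hzb]
  _ = b*u⁻¹*z⁻¹ := by group

lemma hCb : C*b = b*C*(u*u) := by
  calc C*b = (b*z⁻¹)*b := by rw [hCzb]
  _ = b*(z⁻¹*b) := by group
  _ = b*(b*u⁻¹*z⁻¹) := by rw [hz'b]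
  _ = b*b*(u⁻¹*z⁻¹) := by group
  _ = b*b*((u*u)*z⁻¹) := by rw [huinv]
  _ = b*b*(z⁻¹*(u*u)) := by rw [(cuz.mul_left cuz).inv_right.eq]
  _ = b*(b*z⁻¹)*(u*u) := by group
  _ = b*C*(u*u) := by rw [← hCzb]

lemma hDC : D*C = C*D*(u*u) := by
  calc D*C = a⁻¹*(C*b)*a := by unfold D C; group
  _ = a⁻¹*(b*C*(u*u))*a := by rw [hCb]
  _ = (a⁻¹*b*a)*(a⁻¹*C*a)*((a⁻¹*u*a)*(a⁻¹*u*a)) := by group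
  _ = (a⁻¹*b*a)*(a⁻¹*C*a)*(u*u) := by rw [hku]
  _ = C*D*(u*u) := by rw [show (a⁻¹*b*a : G) = C from rfl, show (a⁻¹*C*a : G) = D from rfl]

lemma hDb : D*b = b*D*u := by
  have h2 : b*D = D*b*(u*u) := by
    calc b*D = (a⁻¹*D*a)*(a⁻¹*C*a) := by rw [hkD, show (a⁻¹*C*a : G) = D from rfl]
    _ = a⁻¹*(D*C)*a := by group
    _ = a⁻¹*(C*D*(u*u))*a := by rw [hDC]
    _ = (a⁻¹*C*a)*(a⁻¹*D*a)*((a⁻¹*u*a)*(a⁻¹*u*a)) := by group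
    _ = (a⁻¹*C*a)*(a⁻¹*D*a)*(u*u) := by rw [hku]
    _ = D*b*(u*u) := by rw [hkD, show (a⁻¹*C*a : G) = D from rfl]
  calc D*b = (b*D)*(u*u)⁻¹ := by rw [h2]; group
  _ = (b*D)*u := by rw [hu2inv]
  _ = b*D*u := by group

lemma cuC : Commute u C := (cua.inv_right.mul_right cub).mul_right cua

lemma cuD : Commute u D := (cua.inv_right.mul_right cuC).mul_right cua

/-! Normal form -/

lemma ha3 : a^3 = u := by rw [pow_three]; exact rel2'
lemma hb3 : b^3 = u := by rw [pow_three]; rfl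
lemma hC3p : C^3 = u := by rw [pow_three]; exact hC3
lemma hD3p : D^3 = u := by rw [pow_three]; exact hD3
lemma hu3p : u^3 = 1 := by rw [pow_three, ← mul_assoc]; exact hu3

def F (M I J K L : ℕ) : G := a^M * (b^I * (C^J * (D^K * u^L)))

lemma mv3 (n K L : ℕ) : u^n * (D^K * u^L) = D^K * u^(n+L) := by
  rw [← mul_assoc, ((cuD.pow_right K).pow_left n).eq, mul_assoc, ← pow_add]

lemma mv2 (n J K L : ℕ) : u^n * (C^J * (D^K * u^L)) = C^J * (D^K * u^(n+L)) := by
  rw [← mul_assoc, ((cuC.pow_right J).pow_left n).eq, mul_assoc, mv3]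

lemma mv1 (n I J K L : ℕ) : u^n * (b^I * (C^J * (D^K * u^L)))
    = b^I * (C^J * (D^K * u^(n+L))) := by
  rw [← mul_assoc, ((cub.pow_right I).pow_left n).eq, mul_assoc, mv2]

lemma a_pow' (M : ℕ) (w : G) : a^M * w = a^(M%3) * (u^(M/3) * w) := by
  conv_lhs => rw [← Nat.div_add_mod M 3, pow_add, pow_mul, ha3]
  rw [((cua.pow_right (M%3)).pow_left (M/3)).eq, mul_assoc]

lemma b_pow' (I : ℕ) (w : G) : b^I * w = b^(I%3) * (u^(I/3) * w) := by
  conv_lhs => rw [← Nat.div_add_mod I 3, pow_add, pow_mul, hb3]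
  rw [((cub.pow_right (I%3)).pow_left (I/3)).eq, mul_assoc]

lemma C_pow' (J : ℕ) (w : G) : C^J * w = C^(J%3) * (u^(J/3) * w) := by
  conv_lhs => rw [← Nat.div_add_mod J 3, pow_add, pow_mul, hC3p]
  rw [((cuC.pow_right (J%3)).pow_left (J/3)).eq, mul_assoc]

lemma D_pow' (K : ℕ) (w : G) : D^K * w = D^(K%3) * (u^(K/3) * w) := by
  conv_lhs => rw [← Nat.div_add_mod K 3, pow_add, pow_mul, hD3p]
  rw [((cuD.pow_right (K%3)).pow_left (K/3)).eq, mul_assoc]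

lemma u_pow' (L : ℕ) : u^L = u^(L%3) := by
  conv_lhs => rw [← Nat.div_add_mod L 3, pow_add, pow_mul, hu3p, one_pow, one_mul]

lemma normF (M I J K L : ℕ) :
    F M I J K L = F (M%3) (I%3) (J%3) (K%3) ((L+M/3+I/3+J/3+K/3)%3) := by
  unfold F
  rw [a_pow', mv1, b_pow', mv2, C_pow', mv3, D_pow', ← pow_add, u_pow',
    show K/3 + (J/3 + (I/3 + (M/3 + L))) = L+M/3+I/3+J/3+K/3 from by omega]

/-- the collection/normal-form parametrization -/
def f (v : Fin 3 × Fin 3 × Fin 3 × Fin 3 × Fin 3) : G :=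
  F v.1.val v.2.1.val v.2.2.1.val v.2.2.2.1.val v.2.2.2.2.val

lemma mem_range (M I J K L : ℕ) : F M I J K L ∈ Set.range f := by
  refine ⟨(⟨M%3, by omega⟩, ⟨I%3, by omega⟩, ⟨J%3, by omega⟩, ⟨K%3, by omega⟩,
    ⟨(L+M/3+I/3+J/3+K/3)%3, by omega⟩), ?_⟩
  exact (normF M I J K L).symm

/-! left multiplication rules -/

lemma mv1u (I J K L : ℕ) : u * (b^I * (C^J * (D^K * u^L)))
    = b^I * (C^J * (D^K * u^(L+1))) := by
  have h := mv1 1 I J K L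
  rw [pow_one, Nat.add_comm 1 L] at h
  exact h

lemma Fu (M I J K L : ℕ) : u * F M I J K L = F M I J K (L+1) := by
  unfold F
  rw [← mul_assoc, (cua.pow_right M).eq, mul_assoc, mv1u]

lemma Fa (M I J K L : ℕ) : a * F M I J K L = F (M+1) I J K L := by
  unfold F
  rw [pow_succ' a M, mul_assoc]

lemma Cb_pow : ∀ (I : ℕ) (w : G), C * (b^I * w) = b^I * (C * (u^(2*I) * w)) := by
  intro I
  induction I with
  | zero => intro w; simp
  | succ n ih =>
    intro w
    calc C * (b^(n+1) * w) = (C * b) * (b^n * w) := by rw [pow_succ' b n]; simp only [mul_assoc]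
    _ = (b*C*(u*u)) * (b^n * w) := by rw [hCb]
    _ = b * (C * (((u*u) * b^n) * w)) := by simp only [mul_assoc]
    _ = b * (C * ((b^n * (u*u)) * w)) := by rw [((cub.mul_left cub).pow_right n).eq]
    _ = b * (C * (b^n * ((u*u) * w))) := by simp only [mul_assoc]
    _ = b * (b^n * (C * (u^(2*n) * ((u*u) * w)))) := by rw [ih]
    _ = b^(n+1) * (C * ((u^(2*n) * (u*u)) * w)) := by rw [pow_succ' b n]; simp only [mul_assoc]
    _ = b^(n+1) * (C * (u^(2*(n+1)) * w)) := by
        rw [show u^(2*n)*(u*u) = u^(2*(n+1)) from by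
          rw [show 2*(n+1) = 2*n + 1 + 1 from by omega, pow_succ, pow_succ, mul_assoc]]

lemma Db_pow : ∀ (I : ℕ) (w : G), D * (b^I * w) = b^I * (D * (u^I * w)) := by
  intro I
  induction I with
  | zero => intro w; simp
  | succ n ih =>
    intro w
    calc D * (b^(n+1) * w) = (D * b) * (b^n * w) := by rw [pow_succ' b n]; simp only [mul_assoc]
    _ = (b*D*u) * (b^n * w) := by rw [hDb]
    _ = b * (D * ((u * b^n) * w)) := by simp only [mul_assoc]
    _ = b * (D * ((b^n * u) * w)) := by rw [(cub.pow_right n).eq]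
    _ = b * (D * (b^n * (u * w))) := by simp only [mul_assoc]
    _ = b * (b^n * (D * (u^n * (u * w)))) := by rw [ih]
    _ = b^(n+1) * (D * ((u^n * u) * w)) := by rw [pow_succ' b n]; simp only [mul_assoc]
    _ = b^(n+1) * (D * (u^(n+1) * w)) := by rw [← pow_succ]

lemma DC_pow : ∀ (J : ℕ) (w : G), D * (C^J * w) = C^J * (D * (u^(2*J) * w)) := by
  intro J
  induction J with
  | zero => intro w; simp
  | succ n ih =>
    intro w
    calc D * (C^(n+1) * w) = (D * C) * (C^n * w) := by rw [pow_succ' C n]; simp only [mul_assoc]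
    _ = (C*D*(u*u)) * (C^n * w) := by rw [hDC]
    _ = C * (D * (((u*u) * C^n) * w)) := by simp only [mul_assoc]
    _ = C * (D * ((C^n * (u*u)) * w)) := by rw [((cuC.mul_left cuC).pow_right n).eq]
    _ = C * (D * (C^n * ((u*u) * w))) := by simp only [mul_assoc]
    _ = C * (C^n * (D * (u^(2*n) * ((u*u) * w)))) := by rw [ih]
    _ = C^(n+1) * (D * ((u^(2*n) * (u*u)) * w)) := by rw [pow_succ' C n]; simp only [mul_assoc]
    _ = C^(n+1) * (D * (u^(2*(n+1)) * w)) := by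
        rw [show u^(2*n)*(u*u) = u^(2*(n+1)) from by
          rw [show 2*(n+1) = 2*n + 1 + 1 from by omega, pow_succ, pow_succ, mul_assoc]]

lemma Fb0 (I J K L : ℕ) : b * F 0 I J K L = F 0 (I+1) J K L := by
  unfold F
  rw [pow_zero, one_mul, one_mul, pow_succ' b I, mul_assoc]

lemma Fb1 (I J K L : ℕ) : b * F 1 I J K L = F 1 I (J+1) K (2*I+L) := by
  unfold F
  calc b * (a^1 * (b^I * (C^J * (D^K * u^L))))
      = (b * a) * (b^I * (C^J * (D^K * u^L))) := by rw [pow_one]; simp only [mul_assoc]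
  _ = a * (C * (b^I * (C^J * (D^K * u^L)))) := by rw [hba]; simp only [mul_assoc]
  _ = a * (b^I * (C * (u^(2*I) * (C^J * (D^K * u^L))))) := by rw [Cb_pow]
  _ = a * (b^I * (C * (C^J * (D^K * u^(2*I+L))))) := by rw [mv2]
  _ = a^1 * (b^I * (C^(J+1) * (D^K * u^(2*I+L)))) := by rw [pow_one, pow_succ' C J]; simp only [mul_assoc]

lemma Fb2 (I J K L : ℕ) : b * F 2 I J K L = F 2 I J (K+1) (2*J+(I+L)) := by
  unfold F
  calc b * (a^2 * (b^I * (C^J * (D^K * u^L))))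
      = (b * a) * (a * (b^I * (C^J * (D^K * u^L)))) := by rw [pow_two]; simp only [mul_assoc]
  _ = a * ((C * a) * (b^I * (C^J * (D^K * u^L)))) := by rw [hba]; simp only [mul_assoc]
  _ = a * (a * (D * (b^I * (C^J * (D^K * u^L))))) := by rw [hCa]; simp only [mul_assoc]
  _ = a * (a * (b^I * (D * (u^I * (C^J * (D^K * u^L)))))) := by rw [Db_pow]
  _ = a * (a * (b^I * (D * (C^J * (D^K * u^(I+L)))))) := by rw [mv2]
  _ = a * (a * (b^I * (C^J * (D * (u^(2*J) * (D^K * u^(I+L))))))) := by rw [DC_pow]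
  _ = a * (a * (b^I * (C^J * (D * (D^K * u^(2*J+(I+L))))))) := by rw [mv3]
  _ = a^2 * (b^I * (C^J * (D^(K+1) * u^(2*J+(I+L))))) := by
        rw [pow_two, pow_succ' D K]; simp only [mul_assoc]

lemma ainv (w : G) : a⁻¹ * w = a * (a * (u * (u * w))) := by
  have h : a * (a * (u * u)) = a⁻¹ := by
    calc a * (a * (u*u)) = a⁻¹ * ((a*(a*a)) * (u*u)) := by group
    _ = a⁻¹ * (u * (u*u)) := by rw [rel2']
    _ = a⁻¹ * (u*u*u) := by simp only [mul_assoc]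
    _ = a⁻¹ * 1 := by rw [hu3]
    _ = a⁻¹ := by group
  rw [← h]; simp only [mul_assoc]

lemma binv (w : G) : b⁻¹ * w = b * (b * (u * (u * w))) := by
  have h : b * (b * (u * u)) = b⁻¹ := by
    calc b * (b * (u*u)) = b⁻¹ * ((b*(b*b)) * (u*u)) := by group
    _ = b⁻¹ * (u * (u*u)) := by rw [show (b*(b*b) : G) = u from rfl]
    _ = b⁻¹ * (u*u*u) := by simp only [mul_assoc]
    _ = b⁻¹ * 1 := by rw [hu3]
    _ = b⁻¹ := by group
  rw [← h]; simp only [mul_assoc]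

lemma range_u {g : G} (hg : g ∈ Set.range f) : u * g ∈ Set.range f := by
  obtain ⟨⟨m,i,j,k,l⟩, rfl⟩ := hg
  rw [show f (m,i,j,k,l) = F m.val i.val j.val k.val l.val from rfl, Fu]
  exact mem_range _ _ _ _ _

lemma range_a {g : G} (hg : g ∈ Set.range f) : a * g ∈ Set.range f := by
  obtain ⟨⟨m,i,j,k,l⟩, rfl⟩ := hg
  rw [show f (m,i,j,k,l) = F m.val i.val j.val k.val l.val from rfl, Fa]
  exact mem_range _ _ _ _ _

lemma range_b {g : G} (hg : g ∈ Set.range f) : b * g ∈ Set.range f := by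
  obtain ⟨⟨m,i,j,k,l⟩, rfl⟩ := hg
  rw [show f (m,i,j,k,l) = F m.val i.val j.val k.val l.val from rfl]
  have h3 : m.val = 0 ∨ m.val = 1 ∨ m.val = 2 := by omega
  rcases h3 with h | h | h <;> rw [h]
  · rw [Fb0]; exact mem_range _ _ _ _ _
  · rw [Fb1]; exact mem_range _ _ _ _ _
  · rw [Fb2]; exact mem_range _ _ _ _ _

lemma f_surjective : Function.Surjective f := by
  intro g
  have hg : g ∈ Subgroup.closure (Set.range (PresentedGroup.of :
      Fin 2 → PresentedGroup scholzTausskyRels)) := by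
    rw [PresentedGroup.closure_range_of]; trivial
  have key : g ∈ Set.range f := by
    induction hg using Subgroup.closure_induction_left with
    | one =>
      exact ⟨(0,0,0,0,0), by simp [f, F]⟩
    | mul_left x hx y hy ih =>
      obtain ⟨i, rfl⟩ := hx
      fin_cases i
      · exact range_a ih
      · exact range_b ih
    | inv_mul_cancel x hx y hy ih =>
      obtain ⟨i, rfl⟩ := hx
      fin_cases i
      · show (a⁻¹ * y) ∈ Set.range f
        rw [ainv]
        exact range_a (range_a (range_u (range_u ih)))
      · show (b⁻¹ * y) ∈ Set.range f
        rw [binv]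
        exact range_b (range_b (range_u (range_u ih)))
  exact key

/-! Permutation representation on 54 points -/

def aT : Fin 54 → Fin 54 := ![14,9,3,21,0,23,20,15,12,17,24,25,16,26,1,22,13,7,8,18,10,6,4,19,11,2,5,42,36,27,52,33,49,53,51,50,44,35,47,34,48,32,29,30,28,38,40,45,46,41,37,39,43,31]
def aT' : Fin 54 → Fin 54 := ![4,14,25,2,22,26,21,17,18,1,20,24,8,16,0,7,12,9,19,23,6,3,15,5,10,11,13,29,44,42,43,53,41,31,39,37,28,50,45,51,46,49,27,52,36,47,48,38,40,32,35,34,30,33]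
def bT : Fin 54 → Fin 54 := ![7,13,18,17,8,19,16,23,15,4,20,14,6,0,21,1,26,10,12,2,22,3,25,9,5,11,24,41,38,45,44,31,32,29,35,49,36,37,51,39,53,52,42,43,46,33,30,47,48,34,40,28,27,50]
def bT' : Fin 54 → Fin 54 := ![13,15,19,21,9,24,12,0,4,23,17,25,18,1,11,8,6,3,2,5,10,14,20,7,26,22,16,52,51,33,46,31,32,45,49,34,36,37,28,39,50,27,42,43,30,29,44,47,48,35,53,38,41,40]

def pa : Equiv.Perm (Fin 54) := ⟨aT, aT', by decide, by decide⟩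
def pb : Equiv.Perm (Fin 54) := ⟨bT, bT', by decide, by decide⟩

abbrev TUP := Fin 3 × Fin 3 × Fin 3 × Fin 3 × Fin 3

def pC : Equiv.Perm (Fin 54) := pa⁻¹ * pb * pa
def pD : Equiv.Perm (Fin 54) := pa⁻¹ * pC * pa
def pu : Equiv.Perm (Fin 54) := pb * (pb * pb)

def Phi (M I J K L : ℕ) : Equiv.Perm (Fin 54) :=
  pa^M * (pb^I * (pC^J * (pD^K * pu^L)))

def evΦ (v : TUP) : Fin 54 × Fin 54 :=
  (Phi v.1.val v.2.1.val v.2.2.1.val v.2.2.2.1.val v.2.2.2.2.val 0,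
   Phi v.1.val v.2.1.val v.2.2.1.val v.2.2.2.1.val v.2.2.2.2.val 27)

def decL : List ((Fin 54 × Fin 54) × TUP) := [
  ((0,27),(0,0,0,0,0)),
  ((9,27),(0,0,0,0,1)),
  ((15,27),(0,0,0,0,2)),
  ((12,38),(0,0,0,1,0)),
  ((26,38),(0,0,0,1,1)),
  ((19,38),(0,0,0,1,2)),
  ((22,53),(0,0,0,2,0)),
  ((14,53),(0,0,0,2,1)),
  ((17,53),(0,0,0,2,2)),
  ((3,27),(0,0,1,0,0)),
  ((20,27),(0,0,1,0,1)),
  ((11,27),(0,0,1,0,2)),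
  ((13,38),(0,0,1,1,0)),
  ((23,38),(0,0,1,1,1)),
  ((8,38),(0,0,1,1,2)),
  ((18,53),(0,0,1,2,0)),
  ((16,53),(0,0,1,2,1)),
  ((5,53),(0,0,1,2,2)),
  ((2,27),(0,0,2,0,0)),
  ((6,27),(0,0,2,0,1)),
  ((24,27),(0,0,2,0,2)),
  ((10,38),(0,0,2,1,0)),
  ((25,38),(0,0,2,1,1)),
  ((21,38),(0,0,2,1,2)),
  ((7,53),(0,0,2,2,0)),
  ((4,53),(0,0,2,2,1)),
  ((1,53),(0,0,2,2,2)),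
  ((7,41),(0,1,0,0,0)),
  ((4,41),(0,1,0,0,1)),
  ((1,41),(0,1,0,0,2)),
  ((6,51),(0,1,0,1,0)),
  ((24,51),(0,1,0,1,1)),
  ((2,51),(0,1,0,1,2)),
  ((25,50),(0,1,0,2,0)),
  ((21,50),(0,1,0,2,1)),
  ((10,50),(0,1,0,2,2)),
  ((17,41),(0,1,1,0,0)),
  ((22,41),(0,1,1,0,1)),
  ((14,41),(0,1,1,0,2)),
  ((0,51),(0,1,1,1,0)),
  ((9,51),(0,1,1,1,1)),
  ((15,51),(0,1,1,1,2)),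
  ((12,50),(0,1,1,2,0)),
  ((26,50),(0,1,1,2,1)),
  ((19,50),(0,1,1,2,2)),
  ((18,41),(0,1,2,0,0)),
  ((16,41),(0,1,2,0,1)),
  ((5,41),(0,1,2,0,2)),
  ((20,51),(0,1,2,1,0)),
  ((11,51),(0,1,2,1,1)),
  ((3,51),(0,1,2,1,2)),
  ((23,50),(0,1,2,2,0)),
  ((8,50),(0,1,2,2,1)),
  ((13,50),(0,1,2,2,2)),
  ((23,52),(0,2,0,0,0)),
  ((8,52),(0,2,0,0,1)),
  ((13,52),(0,2,0,0,2)),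
  ((16,28),(0,2,0,1,0)),
  ((5,28),(0,2,0,1,1)),
  ((18,28),(0,2,0,1,2)),
  ((11,40),(0,2,0,2,0)),
  ((3,40),(0,2,0,2,1)),
  ((20,40),(0,2,0,2,2)),
  ((10,52),(0,2,1,0,0)),
  ((25,52),(0,2,1,0,1)),
  ((21,52),(0,2,1,0,2)),
  ((7,28),(0,2,1,1,0)),
  ((4,28),(0,2,1,1,1)),
  ((1,28),(0,2,1,1,2)),
  ((6,40),(0,2,1,2,0)),
  ((24,40),(0,2,1,2,1)),
  ((2,40),(0,2,1,2,2)),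
  ((12,52),(0,2,2,0,0)),
  ((26,52),(0,2,2,0,1)),
  ((19,52),(0,2,2,0,2)),
  ((22,28),(0,2,2,1,0)),
  ((14,28),(0,2,2,1,1)),
  ((17,28),(0,2,2,1,2)),
  ((9,40),(0,2,2,2,0)),
  ((15,40),(0,2,2,2,1)),
  ((0,40),(0,2,2,2,2)),
  ((14,42),(1,0,0,0,0)),
  ((17,42),(1,0,0,0,1)),
  ((22,42),(1,0,0,0,2)),
  ((16,47),(1,0,0,1,0)),
  ((5,47),(1,0,0,1,1)),
  ((18,47),(1,0,0,1,2)),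
  ((4,31),(1,0,0,2,0)),
  ((1,31),(1,0,0,2,1)),
  ((7,31),(1,0,0,2,2)),
  ((21,42),(1,0,1,0,0)),
  ((10,42),(1,0,1,0,1)),
  ((25,42),(1,0,1,0,2)),
  ((26,47),(1,0,1,1,0)),
  ((19,47),(1,0,1,1,1)),
  ((12,47),(1,0,1,1,2)),
  ((8,31),(1,0,1,2,0)),
  ((13,31),(1,0,1,2,1)),
  ((23,31),(1,0,1,2,2)),
  ((3,42),(1,0,2,0,0)),
  ((20,42),(1,0,2,0,1)),
  ((11,42),(1,0,2,0,2)),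
  ((24,47),(1,0,2,1,0)),
  ((2,47),(1,0,2,1,1)),
  ((6,47),(1,0,2,1,2)),
  ((15,31),(1,0,2,2,0)),
  ((0,31),(1,0,2,2,1)),
  ((9,31),(1,0,2,2,2)),
  ((15,32),(1,1,0,0,0)),
  ((0,32),(1,1,0,0,1)),
  ((9,32),(1,1,0,0,2)),
  ((20,39),(1,1,0,1,0)),
  ((11,39),(1,1,0,1,1)),
  ((3,39),(1,1,0,1,2)),
  ((2,37),(1,1,0,2,0)),
  ((6,37),(1,1,0,2,1)),
  ((24,37),(1,1,0,2,2)),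
  ((7,32),(1,1,1,0,0)),
  ((4,32),(1,1,1,0,1)),
  ((1,32),(1,1,1,0,2)),
  ((14,39),(1,1,1,1,0)),
  ((17,39),(1,1,1,1,1)),
  ((22,39),(1,1,1,1,2)),
  ((16,37),(1,1,1,2,0)),
  ((5,37),(1,1,1,2,1)),
  ((18,37),(1,1,1,2,2)),
  ((8,32),(1,1,2,0,0)),
  ((13,32),(1,1,2,0,1)),
  ((23,32),(1,1,2,0,2)),
  ((10,39),(1,1,2,1,0)),
  ((25,39),(1,1,2,1,1)),
  ((21,39),(1,1,2,1,2)),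
  ((19,37),(1,1,2,2,0)),
  ((12,37),(1,1,2,2,1)),
  ((26,37),(1,1,2,2,2)),
  ((19,43),(1,2,0,0,0)),
  ((12,43),(1,2,0,0,1)),
  ((26,43),(1,2,0,0,2)),
  ((13,36),(1,2,0,1,0)),
  ((23,36),(1,2,0,1,1)),
  ((8,36),(1,2,0,1,2)),
  ((25,48),(1,2,0,2,0)),
  ((21,48),(1,2,0,2,1)),
  ((10,48),(1,2,0,2,2)),
  ((24,43),(1,2,1,0,0)),
  ((2,43),(1,2,1,0,1)),
  ((6,43),(1,2,1,0,2)),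
  ((15,36),(1,2,1,1,0)),
  ((0,36),(1,2,1,1,1)),
  ((9,36),(1,2,1,1,2)),
  ((20,48),(1,2,1,2,0)),
  ((11,48),(1,2,1,2,1)),
  ((3,48),(1,2,1,2,2)),
  ((16,43),(1,2,2,0,0)),
  ((5,43),(1,2,2,0,1)),
  ((18,43),(1,2,2,0,2)),
  ((4,36),(1,2,2,1,0)),
  ((1,36),(1,2,2,1,1)),
  ((7,36),(1,2,2,1,2)),
  ((17,48),(1,2,2,2,0)),
  ((22,48),(1,2,2,2,1)),
  ((14,48),(1,2,2,2,2)),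
  ((1,29),(2,0,0,0,0)),
  ((7,29),(2,0,0,0,1)),
  ((4,29),(2,0,0,0,2)),
  ((13,45),(2,0,0,1,0)),
  ((23,45),(2,0,0,1,1)),
  ((8,45),(2,0,0,1,2)),
  ((0,33),(2,0,0,2,0)),
  ((9,33),(2,0,0,2,1)),
  ((15,33),(2,0,0,2,2)),
  ((6,29),(2,0,1,0,0)),
  ((24,29),(2,0,1,0,1)),
  ((2,29),(2,0,1,0,2)),
  ((5,45),(2,0,1,1,0)),
  ((18,45),(2,0,1,1,1)),
  ((16,45),(2,0,1,1,2)),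
  ((12,33),(2,0,1,2,0)),
  ((26,33),(2,0,1,2,1)),
  ((19,33),(2,0,1,2,2)),
  ((21,29),(2,0,2,0,0)),
  ((10,29),(2,0,2,0,1)),
  ((25,29),(2,0,2,0,2)),
  ((11,45),(2,0,2,1,0)),
  ((3,45),(2,0,2,1,1)),
  ((20,45),(2,0,2,1,2)),
  ((22,33),(2,0,2,2,0)),
  ((14,33),(2,0,2,2,1)),
  ((17,33),(2,0,2,2,2)),
  ((22,49),(2,1,0,0,0)),
  ((14,49),(2,1,0,0,1)),
  ((17,49),(2,1,0,0,2)),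
  ((10,34),(2,1,0,1,0)),
  ((25,34),(2,1,0,1,1)),
  ((21,34),(2,1,0,1,2)),
  ((3,35),(2,1,0,2,0)),
  ((20,35),(2,1,0,2,1)),
  ((11,35),(2,1,0,2,2)),
  ((15,49),(2,1,1,0,0)),
  ((0,49),(2,1,1,0,1)),
  ((9,49),(2,1,1,0,2)),
  ((1,34),(2,1,1,1,0)),
  ((7,34),(2,1,1,1,1)),
  ((4,34),(2,1,1,1,2)),
  ((13,35),(2,1,1,2,0)),
  ((23,35),(2,1,1,2,1)),
  ((8,35),(2,1,1,2,2)),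
  ((12,49),(2,1,2,0,0)),
  ((26,49),(2,1,2,0,1)),
  ((19,49),(2,1,2,0,2)),
  ((24,34),(2,1,2,1,0)),
  ((2,34),(2,1,2,1,1)),
  ((6,34),(2,1,2,1,2)),
  ((18,35),(2,1,2,2,0)),
  ((16,35),(2,1,2,2,1)),
  ((5,35),(2,1,2,2,2)),
  ((18,30),(2,2,0,0,0)),
  ((16,30),(2,2,0,0,1)),
  ((5,30),(2,2,0,0,2)),
  ((26,44),(2,2,0,1,0)),
  ((19,44),(2,2,0,1,1)),
  ((12,44),(2,2,0,1,2)),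
  ((2,46),(2,2,0,2,0)),
  ((6,46),(2,2,0,2,1)),
  ((24,46),(2,2,0,2,2)),
  ((11,30),(2,2,1,0,0)),
  ((3,30),(2,2,1,0,1)),
  ((20,30),(2,2,1,0,2)),
  ((22,44),(2,2,1,1,0)),
  ((14,44),(2,2,1,1,1)),
  ((17,44),(2,2,1,1,2)),
  ((10,46),(2,2,1,2,0)),
  ((25,46),(2,2,1,2,1)),
  ((21,46),(2,2,1,2,2)),
  ((13,30),(2,2,2,0,0)),
  ((23,30),(2,2,2,0,1)),
  ((8,30),(2,2,2,0,2)),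
  ((0,44),(2,2,2,1,0)),
  ((9,44),(2,2,2,1,1)),
  ((15,44),(2,2,2,1,2)),
  ((7,46),(2,2,2,2,0)),
  ((4,46),(2,2,2,2,1)),
  ((1,46),(2,2,2,2,2))]

def dec (x : Fin 54 × Fin 54) : TUP :=
  ((decL.find? (fun e => e.1 = x)).map (·.2)).getD (0,0,0,0,0)

lemma hdec : ∀ v : TUP, dec (evΦ v) = v := by decide

def beta : Fin 2 → Equiv.Perm (Fin 54) := ![pa, pb]

lemma relsOK : ∀ r ∈ scholzTausskyRels, FreeGroup.lift beta r = 1 := by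
  intro r hr
  rcases hr with rfl | rfl
  · simp only [map_mul, map_inv, map_pow, FreeGroup.lift_apply_of, beta]
    apply Equiv.ext
    decide
  · simp only [map_mul, map_inv, map_pow, FreeGroup.lift_apply_of, beta]
    apply Equiv.ext
    decide

def φ : G →* Equiv.Perm (Fin 54) := PresentedGroup.toGroup relsOK

lemma φa : φ a = pa := PresentedGroup.toGroup.of relsOK

lemma φb : φ b = pb := PresentedGroup.toGroup.of relsOK

lemma φC : φ C = pC := by
  simp only [C, pC, map_mul, map_inv, φa, φb]

lemma φD : φ D = pD := by
  simp only [D, pD, map_mul, map_inv, φC, φa]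

lemma φu : φ u = pu := by
  simp only [u, pu, map_mul, φb]

lemma φF (M I J K L : ℕ) : φ (F M I J K L) = Phi M I J K L := by
  simp only [F, Phi, map_mul, map_pow, φa, φb, φC, φD, φu]

lemma φf (v : TUP) : φ (f v) = Phi v.1.val v.2.1.val v.2.2.1.val v.2.2.2.1.val v.2.2.2.2.val :=
  φF _ _ _ _ _

lemma f_injective : Function.Injective f := by
  intro v w h
  have h3 := congrArg φ h
  rw [φf v, φf w] at h3
  have h2 : evΦ v = evΦ w := by
    unfold evΦ
    rw [h3]
  have h4 := congrArg dec h2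
  rwa [hdec, hdec] at h4

end ST

/-- The Scholz–Taussky group `⟨x, y ∣ y^[x,y] = y⁻², x³ = y³⟩` has order
`243 = 3⁵`. -/
theorem stmt_11 : Nat.card (PresentedGroup scholzTausskyRels) = 243 := by
  have hbij : Function.Bijective ST.f := ⟨ST.f_injective, ST.f_surjective⟩
  rw [← Nat.card_congr (Equiv.ofBijective _ hbij)]
  simp [Nat.card_eq_fintype_card]
end
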